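/- Let F be Schur stable, FᵀP*F + I = P* with P* symmetric positive definite, λ = 1 − 1/(2λ_max(P*)), β = ‖P*‖ + 2‖P*F‖², and suppose z(t+1) = F z(t) + G(t) with limsup_t ‖G(t)‖ ≤ g. Then limsup_{t→∞} ‖z(t)‖ ≤ g·√(2β·λ_max(P*)/λ_min(P*)). -/

import Mathlib

set_option synthInstance.maxHeartbeats 1000000
open Matrix

noncomputable def enormE {ι : Type*} [Fintype ι] (v : ι → ℝ) : ℝ :=
  ‖(WithLp.equiv 2 (ι → ℝ)).symm v‖

noncomputable def sn {m n : Type*} [Fintype m] [Fintype n] [DecidableEq n]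
    (A : Matrix m n ℝ) : ℝ :=
  ‖LinearMap.toContinuousLinearMap (Matrix.toEuclideanLin A)‖

def SchurStable {n : ℕ} (F : Matrix (Fin n) (Fin n) ℝ) : Prop :=
  ∀ μ ∈ spectrum ℂ (F.map (algebraMap ℝ ℂ)), ‖μ‖ < 1

variable {n : ℕ}

lemma enormE_nonneg (v : Fin n → ℝ) : 0 ≤ enormE v := norm_nonneg _

lemma sn_nonneg (A : Matrix (Fin n) (Fin n) ℝ) : 0 ≤ sn A := norm_nonneg _

lemma dot_eq_inner (x y : Fin n → ℝ) :
    x ⬝ᵥ y = @inner ℝ _ _ ((WithLp.equiv 2 (Fin n → ℝ)).symm x) ((WithLp.equiv 2 (Fin n → ℝ)).symm y) := by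
  simp [PiLp.inner_apply, dotProduct, mul_comm]

lemma enormE_sq (x : Fin n → ℝ) : x ⬝ᵥ x = enormE x ^ 2 := by
  rw [dot_eq_inner, enormE, real_inner_self_eq_norm_sq]

lemma dot_le (x y : Fin n → ℝ) : x ⬝ᵥ y ≤ enormE x * enormE y := by
  rw [dot_eq_inner]; exact real_inner_le_norm _ _

lemma enormE_mulVec_le (A : Matrix (Fin n) (Fin n) ℝ) (x : Fin n → ℝ) :
    enormE (A *ᵥ x) ≤ sn A * enormE x := by
  have h := (LinearMap.toContinuousLinearMap (Matrix.toEuclideanLin A)).le_opNorm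
    ((WithLp.equiv 2 (Fin n → ℝ)).symm x)
  simpa [enormE, sn, Matrix.toEuclideanLin_apply] using h

lemma enormE_add_le (x y : Fin n → ℝ) : enormE (x + y) ≤ enormE x + enormE y := by
  simpa [enormE] using norm_add_le ((WithLp.equiv 2 (Fin n → ℝ)).symm x) ((WithLp.equiv 2 (Fin n → ℝ)).symm y)

lemma sym_dot (P : Matrix (Fin n) (Fin n) ℝ) (hs : Pᵀ = P) (x y : Fin n → ℝ) :
    x ⬝ᵥ (P *ᵥ y) = y ⬝ᵥ (P *ᵥ x) := by
  rw [Matrix.dotProduct_mulVec, ← Matrix.mulVec_transpose, hs, dotProduct_comm]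

lemma psd_dot {P : Matrix (Fin n) (Fin n) ℝ} (h : P.PosSemidef) (x : Fin n → ℝ) :
    0 ≤ x ⬝ᵥ (P *ᵥ x) := by simpa using h.dotProduct_mulVec_nonneg x

example (P : Matrix (Fin n) (Fin n) ℝ) (hP : P.PosDef) : Pᵀ = P := by
  have := hP.1; simpa [Matrix.IsHermitian, Matrix.conjTranspose_eq_transpose_of_trivial] using this

-- spectrum facts
lemma sym_of_herm {P : Matrix (Fin n) (Fin n) ℝ} (hP : P.IsHermitian) : Pᵀ = P := by
  simpa [Matrix.IsHermitian, Matrix.conjTranspose_eq_transpose_of_trivial] using hP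

lemma herm_comb (P : Matrix (Fin n) (Fin n) ℝ) (hP : P.IsHermitian) (c : ℝ) :
    (c • (1 : Matrix (Fin n) (Fin n) ℝ) - P).IsHermitian := by
  simp [Matrix.IsHermitian, conjTranspose_sub, conjTranspose_smul, sym_of_herm hP]

lemma spec_nonneg_psd {P : Matrix (Fin n) (Fin n) ℝ} (hP : P.IsHermitian)
    (h : ∀ μ ∈ spectrum ℝ P, (0:ℝ) ≤ μ) : P.PosSemidef := by
  apply hP.posSemidef_iff_eigenvalues_nonneg.mpr
  intro i
  exact h _ (hP.eigenvalues_mem_spectrum_real (𝕜 := ℝ) i)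

lemma psd_ub (P : Matrix (Fin n) (Fin n) ℝ) (hP : P.PosDef) (lmax : ℝ)
    (hlmax : ∀ x ∈ Set.range hP.1.eigenvalues, x ≤ lmax) :
    (lmax • (1 : Matrix (Fin n) (Fin n) ℝ) - P).PosSemidef := by
  apply spec_nonneg_psd (herm_comb P hP.1 lmax)
  intro μ hμ
  have h1 : lmax • (1 : Matrix (Fin n) (Fin n) ℝ) - P = algebraMap ℝ _ lmax - P := by
    rw [Algebra.algebraMap_eq_smul_one]
  rw [h1, ← spectrum.singleton_sub_eq, Matrix.IsHermitian.spectrum_real_eq_range_eigenvalues hP.1] at hμ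
  obtain ⟨a, ha, b, hb, rfl⟩ := hμ
  rcases ha with rfl
  have := hlmax b hb
  show (0:ℝ) ≤ _ - _
  linarith

lemma psd_lb (P : Matrix (Fin n) (Fin n) ℝ) (hP : P.PosDef) (lmin : ℝ)
    (hlmin : ∀ x ∈ Set.range hP.1.eigenvalues, lmin ≤ x) :
    (P - lmin • (1 : Matrix (Fin n) (Fin n) ℝ)).PosSemidef := by
  have hH : (P - lmin • (1 : Matrix (Fin n) (Fin n) ℝ)).IsHermitian := by
    simp [Matrix.IsHermitian, conjTranspose_sub, conjTranspose_smul, sym_of_herm hP.1]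
  apply spec_nonneg_psd hH
  intro μ hμ
  have h1 : P - lmin • (1 : Matrix (Fin n) (Fin n) ℝ) = P - algebraMap ℝ _ lmin := by
    rw [Algebra.algebraMap_eq_smul_one]
  rw [h1, ← spectrum.sub_singleton_eq, Matrix.IsHermitian.spectrum_real_eq_range_eigenvalues hP.1] at hμ
  obtain ⟨a, ha, b, hb, rfl⟩ := hμ
  rcases hb with rfl
  have := hlmin a ha
  show (0:ℝ) ≤ _ - _
  linarith

lemma quad_ub {P : Matrix (Fin n) (Fin n) ℝ} {c : ℝ}
    (h : (c • (1 : Matrix (Fin n) (Fin n) ℝ) - P).PosSemidef) (x : Fin n → ℝ) :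
    x ⬝ᵥ (P *ᵥ x) ≤ c * enormE x ^ 2 := by
  have h2 := psd_dot h x
  rw [Matrix.sub_mulVec, Matrix.smul_mulVec, Matrix.one_mulVec, dotProduct_sub,
    dotProduct_smul, enormE_sq] at h2
  simpa using h2

lemma quad_lb {P : Matrix (Fin n) (Fin n) ℝ} {c : ℝ}
    (h : (P - c • (1 : Matrix (Fin n) (Fin n) ℝ)).PosSemidef) (x : Fin n → ℝ) :
    c * enormE x ^ 2 ≤ x ⬝ᵥ (P *ᵥ x) := by
  have h2 := psd_dot h x
  rw [Matrix.sub_mulVec, Matrix.smul_mulVec, Matrix.one_mulVec, dotProduct_sub,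
    dotProduct_smul, enormE_sq] at h2
  simpa using h2

lemma spec_nonneg_of_psd {M : Matrix (Fin n) (Fin n) ℝ} (h : M.PosSemidef) :
    ∀ μ ∈ spectrum ℝ M, (0:ℝ) ≤ μ := by
  rw [Matrix.IsHermitian.spectrum_real_eq_range_eigenvalues h.1]
  rintro μ ⟨i, rfl⟩
  exact h.eigenvalues_nonneg i

lemma iterate_bound {V : ℕ → ℝ} {lam c : ℝ} (h0 : 0 ≤ lam) (hlam1 : lam < 1) (hc : 0 ≤ c)
    (N : ℕ) (hrec : ∀ t, N ≤ t → V (t+1) ≤ lam * V t + c) :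
    ∀ k, V (N + k) ≤ lam ^ k * V N + c / (1 - lam) := by
  have hpos : 0 < 1 - lam := by linarith
  intro k
  induction k with
  | zero => simp; positivity
  | succ k ih =>
    have h1 := hrec (N + k) (Nat.le_add_right N k)
    have h2 : lam * V (N + k) ≤ lam * (lam ^ k * V N + c / (1 - lam)) :=
      mul_le_mul_of_nonneg_left ih h0
    have h3 : lam * (c / (1 - lam)) + c = c / (1 - lam) := by
      field_simp
      ring
    have : V (N + (k+1)) = V ((N + k) + 1) := by ring_nf
    rw [this, pow_succ]
    nlinarith [h1, h2, h3]

lemma dot_mulVec_left (A : Matrix (Fin n) (Fin n) ℝ) (x w : Fin n → ℝ) :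
    (A *ᵥ x) ⬝ᵥ w = x ⬝ᵥ (Aᵀ *ᵥ w) := by
  rw [dotProduct_comm, Matrix.dotProduct_mulVec, ← Matrix.mulVec_transpose, dotProduct_comm]

lemma step_bound (P F : Matrix (Fin n) (Fin n) ℝ) (hsym : Pᵀ = P)
    (heq : Fᵀ * P * F + 1 = P) (lmax : ℝ) (h1 : 1 ≤ lmax)
    (hub : ∀ x, x ⬝ᵥ (P *ᵥ x) ≤ lmax * enormE x ^ 2) (zt Gt : Fin n → ℝ) :
    (F *ᵥ zt + Gt) ⬝ᵥ (P *ᵥ (F *ᵥ zt + Gt)) ≤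
      (1 - 1/(2*lmax)) * (zt ⬝ᵥ (P *ᵥ zt)) + (sn P + 2 * sn (P*F) ^ 2) * enormE Gt ^ 2 := by
  have hPF : Fᵀ * P * F = P - 1 := eq_sub_of_add_eq heq
  have haa : (F *ᵥ zt) ⬝ᵥ (P *ᵥ (F *ᵥ zt)) = zt ⬝ᵥ (P *ᵥ zt) - zt ⬝ᵥ zt := by
    rw [Matrix.mulVec_mulVec, dot_mulVec_left, Matrix.mulVec_mulVec, ← Matrix.mul_assoc, hPF,
      Matrix.sub_mulVec, Matrix.one_mulVec, dotProduct_sub]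
  have hGa : (F *ᵥ zt) ⬝ᵥ (P *ᵥ Gt) = Gt ⬝ᵥ ((P*F) *ᵥ zt) := by
    rw [sym_dot P hsym, Matrix.mulVec_mulVec]
  have hGa2 : Gt ⬝ᵥ (P *ᵥ (F *ᵥ zt)) = Gt ⬝ᵥ ((P*F) *ᵥ zt) := by
    rw [Matrix.mulVec_mulVec]
  have hexp : (F *ᵥ zt + Gt) ⬝ᵥ (P *ᵥ (F *ᵥ zt + Gt)) =
      (zt ⬝ᵥ (P *ᵥ zt) - zt ⬝ᵥ zt) + 2 * (Gt ⬝ᵥ ((P*F) *ᵥ zt)) + Gt ⬝ᵥ (P *ᵥ Gt) := by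
    rw [Matrix.mulVec_add, dotProduct_add, add_dotProduct, add_dotProduct, haa, hGa, hGa2]
    ring
  set nz := enormE zt with hnz
  set nG := enormE Gt with hnG
  set c1 := sn (P*F) with hc1
  set c2 := sn P with hc2
  set V := zt ⬝ᵥ (P *ᵥ zt) with hV
  have hzz : zt ⬝ᵥ zt = nz ^ 2 := enormE_sq zt
  have f1 : Gt ⬝ᵥ ((P*F) *ᵥ zt) ≤ nG * (c1 * nz) :=
    le_trans (dot_le _ _) (mul_le_mul_of_nonneg_left (enormE_mulVec_le _ _) (enormE_nonneg _))
  have f2 : Gt ⬝ᵥ (P *ᵥ Gt) ≤ nG * (c2 * nG) :=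
    le_trans (dot_le _ _) (mul_le_mul_of_nonneg_left (enormE_mulVec_le _ _) (enormE_nonneg _))
  have f3 : V ≤ lmax * nz ^ 2 := hub zt
  have hlx : (0:ℝ) < lmax := by linarith
  have h4 : V / (2*lmax) ≤ nz^2/2 := by
    rw [div_le_div_iff₀ (by positivity) two_pos]
    nlinarith [f3]
  have h5 : 2*(nG*(c1*nz)) ≤ nz^2/2 + 2*c1^2*nG^2 := by
    nlinarith [sq_nonneg (nz - 2*c1*nG)]
  have hVdiv : (1 - 1/(2*lmax)) * V = V - V/(2*lmax) := by ring
  rw [hexp, hzz, hVdiv]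
  linarith [f1, f2, h4, h5]

set_option maxHeartbeats 1000000 in
theorem stmt14 {n : ℕ} (F P : Matrix (Fin n) (Fin n) ℝ)
    (hF : SchurStable F) (hP : P.PosDef) (heq : Fᵀ * P * F + 1 = P)
    (lmax lmin : ℝ)
    (hlmax : IsGreatest (Set.range hP.1.eigenvalues) lmax)
    (hlmin : IsLeast (Set.range hP.1.eigenvalues) lmin)
    (z G : ℕ → (Fin n → ℝ)) (g : ℝ) (hg : 0 ≤ g)
    (hz : ∀ t, z (t + 1) = F.mulVec (z t) + G t)
    (hG : Filter.limsup (fun t => enormE (G t)) Filter.atTop ≤ g) :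
    Filter.limsup (fun t => enormE (z t)) Filter.atTop
      ≤ g * Real.sqrt (2 * (sn P + 2 * (sn (P * F)) ^ 2) * lmax / lmin) := by
  classical
  have hsqnn : 0 ≤ g * Real.sqrt (2 * (sn P + 2 * (sn (P * F)) ^ 2) * lmax / lmin) :=
    mul_nonneg hg (Real.sqrt_nonneg _)
  by_cases hb : Filter.IsBoundedUnder (· ≤ ·) Filter.atTop (fun t => enormE (z t))
  swap
  · -- unbounded case: limsup is sInf ∅ = 0
    rw [Filter.limsup_eq]
    have hset : {a : ℝ | ∀ᶠ t in Filter.atTop, enormE (z t) ≤ a} = ∅ := by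
      rw [Set.eq_empty_iff_forall_notMem]
      intro a ha
      exact hb ⟨a, Filter.eventually_map.2 ha⟩
    rw [hset, Real.sInf_empty]
    exact hsqnn
  have hsym : Pᵀ = P := sym_of_herm hP.1
  have hpsdU := psd_ub P hP lmax (fun x hx => hlmax.2 hx)
  have hpsdL := psd_lb P hP lmin (fun x hx => hlmin.2 hx)
  have hub : ∀ x, x ⬝ᵥ (P *ᵥ x) ≤ lmax * enormE x ^ 2 := fun x => quad_ub hpsdU x
  have hlb : ∀ x, lmin * enormE x ^ 2 ≤ x ⬝ᵥ (P *ᵥ x) := fun x => quad_lb hpsdL x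
  -- P - 1 is PSD
  have hFH : Fᴴ = Fᵀ := by ext i j; simp [Matrix.conjTranspose_apply]
  have hpsd1 : (P - 1).PosSemidef := by
    have h := hP.posSemidef.conjTranspose_mul_mul_same F
    rw [hFH] at h
    rwa [eq_sub_of_add_eq heq] at h
  have h1min : 1 ≤ lmin := by
    have hm : lmin ∈ spectrum ℝ P := by
      rw [Matrix.IsHermitian.spectrum_real_eq_range_eigenvalues hP.1]; exact hlmin.1
    have hmem : lmin - 1 ∈ spectrum ℝ (P - algebraMap ℝ (Matrix (Fin n) (Fin n) ℝ) 1) := by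
      rw [← spectrum.sub_singleton_eq]
      exact Set.sub_mem_sub hm rfl
    rw [_root_.map_one] at hmem
    have := spec_nonneg_of_psd hpsd1 _ hmem
    linarith
  have h1max : 1 ≤ lmax := le_trans h1min (hlmax.2 hlmin.1)
  have hlminpos : (0:ℝ) < lmin := by linarith
  have hlmaxpos : (0:ℝ) < lmax := by linarith
  set β := sn P + 2 * sn (P*F) ^ 2 with hβ
  have hβ0 : 0 ≤ β := by
    have h1 := sn_nonneg P
    have h2 := sq_nonneg (sn (P*F))
    rw [hβ]; linarith
  set lam := 1 - 1/(2*lmax) with hlam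
  have hfrac : (0:ℝ) < 1/(2*lmax) := by positivity
  have hfrac2 : 1/(2*lmax) ≤ 1/2 := by
    apply one_div_le_one_div_of_le two_pos
    linarith
  have hlam0 : 0 ≤ lam := by rw [hlam]; linarith
  have hlam1 : lam < 1 := by rw [hlam]; linarith
  set Vf := fun t => (z t) ⬝ᵥ (P *ᵥ z t) with hVf
  have hVrec : ∀ t, Vf (t+1) ≤ lam * Vf t + β * enormE (G t) ^ 2 := by
    intro t
    have h := step_bound P F hsym heq lmax h1max hub (z t) (G t)
    simpa [hVf, hz t, hβ, hlam] using h
  -- boundedness of G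
  obtain ⟨B, hB⟩ := hb
  rw [Filter.eventually_map] at hB
  obtain ⟨N₀, hN₀⟩ := Filter.eventually_atTop.1 hB
  have hGbdd : Filter.IsBoundedUnder (· ≤ ·) Filter.atTop (fun t => enormE (G t)) := by
    refine ⟨B + sn F * B, ?_⟩
    rw [Filter.eventually_map]
    refine Filter.eventually_atTop.2 ⟨N₀, fun t ht => ?_⟩
    have e1 := hN₀ (t+1) (by omega)
    have e2 := hN₀ t ht
    have hGt : G t = z (t+1) + (-(F *ᵥ z t)) := by
      rw [hz t]; abel
    have h3 : enormE (G t) ≤ enormE (z (t+1)) + enormE (-(F *ᵥ z t)) := by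
      rw [hGt]; exact enormE_add_le _ _
    have h4 : enormE (-(F *ᵥ z t)) = enormE (F *ᵥ z t) := by simp [enormE]
    have h5 : enormE (F *ᵥ z t) ≤ sn F * enormE (z t) := enormE_mulVec_le F (z t)
    have h6 : sn F * enormE (z t) ≤ sn F * B := mul_le_mul_of_nonneg_left e2 (sn_nonneg F)
    rw [h4] at h3
    linarith
  -- key bound for every ε > 0
  have key : ∀ ε : ℝ, 0 < ε → Filter.limsup (fun t => enormE (z t)) Filter.atTop ≤
      Real.sqrt ((2*β*lmax*(g+ε)^2 + ε)/lmin) := by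
    intro ε hε
    have hGev : ∀ᶠ t in Filter.atTop, enormE (G t) ≤ g + ε := by
      have h := Filter.eventually_lt_of_limsup_lt (lt_of_le_of_lt hG (show g < g + ε by linarith)) hGbdd
      exact h.mono fun t ht => le_of_lt ht
    obtain ⟨N, hN⟩ := Filter.eventually_atTop.1 hGev
    have hrec2 : ∀ t, N ≤ t → Vf (t+1) ≤ lam * Vf t + β * (g+ε)^2 := by
      intro t ht
      have h1 := hVrec t
      have h2 : β * enormE (G t) ^ 2 ≤ β * (g+ε)^2 := by
        apply mul_le_mul_of_nonneg_left _ hβ0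
        have hgt := hN t ht
        nlinarith [enormE_nonneg (G t)]
      linarith
    have hiter := iterate_bound hlam0 hlam1 (by positivity) N hrec2
    have h1lam : 1 - lam = 1/(2*lmax) := by rw [hlam]; ring
    have hcd : β*(g+ε)^2 / (1 - lam) = 2*β*lmax*(g+ε)^2 := by
      rw [h1lam]
      field_simp
    have hdecay : Filter.Tendsto (fun k => lam ^ k * Vf N) Filter.atTop (nhds 0) := by
      simpa using (tendsto_pow_atTop_nhds_zero_of_lt_one hlam0 hlam1).mul_const (Vf N)
    have hev2 : ∀ᶠ k in Filter.atTop, lam ^ k * Vf N ≤ ε :=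
      hdecay.eventually (eventually_le_nhds hε)
    obtain ⟨K, hK⟩ := Filter.eventually_atTop.1 hev2
    have hVev : ∀ᶠ t in Filter.atTop, Vf t ≤ 2*β*lmax*(g+ε)^2 + ε := by
      refine Filter.eventually_atTop.2 ⟨N+K, fun t ht => ?_⟩
      have h3 := hiter (t - N)
      rw [Nat.add_sub_cancel' (by omega)] at h3
      have h4 : lam ^ (t-N) * Vf N ≤ ε := hK (t-N) (by omega)
      rw [hcd] at h3
      linarith
    have hzev : ∀ᶠ t in Filter.atTop, enormE (z t) ≤
        Real.sqrt ((2*β*lmax*(g+ε)^2 + ε)/lmin) := by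
      refine hVev.mono fun t ht => ?_
      have h5 := hlb (z t)
      have h6 : enormE (z t) ^ 2 ≤ (2*β*lmax*(g+ε)^2 + ε)/lmin := by
        rw [le_div_iff₀ hlminpos]
        nlinarith [h5, ht]
      calc enormE (z t) = Real.sqrt (enormE (z t) ^ 2) := (Real.sqrt_sq (enormE_nonneg _)).symm
        _ ≤ _ := Real.sqrt_le_sqrt h6
    exact Filter.limsup_le_of_le
      (Filter.isCoboundedUnder_le_of_le Filter.atTop (fun t => enormE_nonneg (z t))) hzev
  -- take ε → 0⁺
  have hcont : Filter.Tendsto (fun ε : ℝ => Real.sqrt ((2*β*lmax*(g+ε)^2 + ε)/lmin))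
      (nhdsWithin 0 (Set.Ioi 0)) (nhds (g * Real.sqrt (2*β*lmax/lmin))) := by
    have hc : Continuous fun ε : ℝ => Real.sqrt ((2*β*lmax*(g+ε)^2 + ε)/lmin) := by
      apply Real.continuous_sqrt.comp
      apply Continuous.div_const
      exact (continuous_const.mul ((continuous_const.add continuous_id).pow 2)).add continuous_id
    have h0 : Real.sqrt ((2*β*lmax*(g+0)^2 + 0)/lmin) = g * Real.sqrt (2*β*lmax/lmin) := by
      have harg : (2*β*lmax*(g+0)^2 + 0)/lmin = g^2 * (2*β*lmax/lmin) := by ring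
      rw [harg, Real.sqrt_mul (sq_nonneg g), Real.sqrt_sq hg]
    have := (hc.tendsto 0).mono_left (nhdsWithin_le_nhds (s := Set.Ioi (0:ℝ)))
    rwa [h0] at this
  have hfinal : Filter.limsup (fun t => enormE (z t)) Filter.atTop ≤ g * Real.sqrt (2*β*lmax/lmin) := by
    refine ge_of_tendsto hcont ?_
    filter_upwards [self_mem_nhdsWithin] with ε hε using key ε hε
  exact hfinal
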